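/- Let K₁, K₂ be disjoint compact convex sets in ℝ², each with nonempty interior. Then there are exactly four lines tangent to both K₁ and K₂ (two outer and two inner common tangents). -/

import Mathlib

open Set

noncomputable section

abbrev Pt := EuclideanSpace ℝ (Fin 2)

/-- The line through `p` with direction `v`. -/
def lineThrough (p v : Pt) : Set Pt := {x | ∃ t : ℝ, x = p + t • v}

/-- The coverage of a set `U`: points such that every line through them meets `U`. -/
def coverage (U : Set Pt) : Set Pt :=
  {p | ∀ v : Pt, v ≠ 0 → (lineThrough p v ∩ U).Nonempty}

/-- A barrier: a finite set of closed line segments in the plane. -/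
def IsBarrier (B : Set (Set Pt)) : Prop :=
  B.Finite ∧ ∀ S ∈ B, ∃ a b : Pt, S = segment ℝ a b

/-- Unit vector at angle `θ`. -/
def dir (θ : ℝ) : Pt := (WithLp.equiv 2 (Fin 2 → ℝ)).symm ![Real.cos θ, Real.sin θ]

/-- A set is a line. -/
def IsLine (L : Set Pt) : Prop := ∃ p v : Pt, v ≠ 0 ∧ L = lineThrough p v

/-- A line L is tangent to K if it meets K and K lies in one closed halfplane of L. -/
def IsTangentTo (L K : Set Pt) : Prop :=
  (L ∩ K).Nonempty ∧ ∃ f : Pt →L[ℝ] ℝ, f ≠ 0 ∧ ∃ c : ℝ,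
    L ⊆ {x | f x = c} ∧ K ⊆ {x | f x ≤ c}

/-! Separate `K₁` from `K₂` strictly by a unit vector `w` and record a common tangent line by the
unit normal `u` pointing away from `K₁` together with its level `c = max_{K₁} ⟪u, ·⟫`; the line is
an outer tangent when also `c = max_{K₂} ⟪u, ·⟫` and an inner one when `c = min_{K₂} ⟪u, ·⟫`.
No such `u` is parallel to `w`. On each open half-circle `ω(w, u) > 0`, `ω(w, u) < 0` the
intermediate value theorem, applied along the arc from `w` to `-w` to the differences of these
support values, produces one outer and one inner normal. Uniqueness: for two normals `u₁, u₂` of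
the same kind on the same side, differences `d = q - p` of touching points `p ∈ K₁`, `q ∈ K₂`
satisfy `⟪w, d⟫ > 0` and `⟪u₁, d⟫ ≤ 0 ≤ ⟪u₂, d⟫` for one choice and the reverse for another, and
the identity `⟪w, d⟫ ω(u₁, u₂) = ⟪u₁, d⟫ ω(w, u₂) - ⟪u₂, d⟫ ω(w, u₁)` then forces
`ω(u₁, u₂) = 0`, i.e. `u₁ = u₂`. Interior points of `K₁` and `K₂` keep the four lines apart. -/

open Module InnerProductSpace Topology
open scoped RealInnerProductSpace EuclideanSpace

attribute [local instance] FiniteDimensional.of_fact_finrank_eq_two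

section TwoDim

variable {E : Type*} [NormedAddCommGroup E] [InnerProductSpace ℝ E] [Fact (finrank ℝ E = 2)]

instance : Nonempty (Orientation ℝ E (Fin 2)) :=
  ⟨(finBasisOfFinrankEq ℝ E Fact.out).orientation⟩

namespace Orientation

variable (o : Orientation ℝ E (Fin 2))

local notation "ω" => o.areaForm
local notation "J" => o.rightAngleRotation

theorem inner_smul_add_areaForm_smul (a x : E) : ⟪a, x⟫ • a + ω a x • J a = ‖a‖ ^ 2 • x := by
  refine ext_inner_left ℝ fun y => ?_
  rw [inner_add_right, real_inner_smul_right, real_inner_smul_right, real_inner_smul_right,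
    inner_rightAngleRotation_right, o.areaForm_swap y a, neg_neg, real_inner_comm a y,
    real_inner_comm x y]
  exact o.inner_mul_inner_add_areaForm_mul_areaForm a x y

theorem eq_areaForm_smul_of_inner_eq_zero {u x : E} (hu : ‖u‖ = 1) (h : ⟪u, x⟫ = 0) :
    x = ω u x • J u := by
  simpa [h, hu] using (o.inner_smul_add_areaForm_smul u x).symm

theorem inner_mul_areaForm_eq (w d u₁ u₂ : E) :
    ⟪w, d⟫ * ω u₁ u₂ = ⟪u₁, d⟫ * ω w u₂ - ⟪u₂, d⟫ * ω w u₁ := by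
  rcases eq_or_ne w 0 with rfl | hw
  · simp
  refine mul_left_cancel₀ (pow_ne_zero 2 (norm_ne_zero_iff.2 hw)) ?_
  linear_combination (-⟪w, d⟫) * o.inner_mul_areaForm_sub w u₁ u₂
    + ω w u₂ * o.inner_mul_inner_add_areaForm_mul_areaForm w u₁ d
    - ω w u₁ * o.inner_mul_inner_add_areaForm_mul_areaForm w u₂ d

theorem areaForm_nonpos_of_inner {w d u₁ u₂ : E} (hd : 0 < ⟪w, d⟫) (h₁ : 0 < ω w u₁)
    (h₂ : 0 < ω w u₂) (hd₁ : ⟪u₁, d⟫ ≤ 0) (hd₂ : 0 ≤ ⟪u₂, d⟫) : ω u₁ u₂ ≤ 0 := by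
  have := o.inner_mul_areaForm_eq w d u₁ u₂
  nlinarith [mul_nonpos_of_nonpos_of_nonneg hd₁ h₂.le, mul_nonneg hd₂ h₁.le]

theorem eq_of_areaForm_eq_zero {w u₁ u₂ : E} (hu₁ : ‖u₁‖ = 1) (hu₂ : ‖u₂‖ = 1)
    (h₁ : 0 < ω w u₁) (h₂ : 0 < ω w u₂) (h : ω u₁ u₂ = 0) : u₁ = u₂ := by
  have key := o.inner_mul_areaForm_sub u₁ w u₂
  rw [h, hu₁, o.areaForm_swap u₁ w] at key
  have hinner : 0 ≤ ⟪u₁, u₂⟫ := by nlinarith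
  exact ((o.nonneg_inner_and_areaForm_eq_zero_iff_sameRay u₁ u₂).1 ⟨hinner, h⟩).eq_of_norm_eq
    (hu₁.trans hu₂.symm)

theorem eq_of_inner_nonpos_of_inner_nonneg {w d₁ d₂ u₁ u₂ : E} (hu₁ : ‖u₁‖ = 1)
    (hu₂ : ‖u₂‖ = 1) (h₁ : 0 < ω w u₁) (h₂ : 0 < ω w u₂) (hd₁ : 0 < ⟪w, d₁⟫) (hd₂ : 0 < ⟪w, d₂⟫)
    (h₁₁ : ⟪u₁, d₁⟫ ≤ 0) (h₂₁ : 0 ≤ ⟪u₂, d₁⟫) (h₂₂ : ⟪u₂, d₂⟫ ≤ 0) (h₁₂ : 0 ≤ ⟪u₁, d₂⟫) :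
    u₁ = u₂ := by
  refine o.eq_of_areaForm_eq_zero hu₁ hu₂ h₁ h₂ (le_antisymm ?_ ?_)
  · exact o.areaForm_nonpos_of_inner hd₁ h₁ h₂ h₁₁ h₂₁
  · rw [o.areaForm_swap, neg_nonneg]
    exact o.areaForm_nonpos_of_inner hd₂ h₂ h₁ h₂₂ h₁₂

theorem exists_areaForm_pos_and_eq_zero {w : E} (hw : ‖w‖ = 1) {φ : E → ℝ}
    (hφ : Continuous φ) (h₀ : φ w < 0) (hπ : 0 < φ (-w)) :
    ∃ u, ‖u‖ = 1 ∧ 0 < ω w u ∧ φ u = 0 := by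
  let γ : ℝ → E := fun t => Real.cos t • w + Real.sin t • J w
  have hγ : ∀ t, γ t = o.rotation t w := fun t => by simp [γ, o.rotation_apply]
  obtain ⟨t, ht, hφt⟩ := intermediate_value_Ioo Real.pi_pos.le
    (hφ.comp (by fun_prop : Continuous γ)).continuousOn
    (show (0 : ℝ) ∈ _ by simpa [γ] using ⟨h₀, hπ⟩)
  refine ⟨γ t, by rw [hγ, LinearIsometryEquiv.norm_map, hw], ?_, hφt⟩
  simpa [γ, hw] using Real.sin_pos_of_pos_of_lt_pi ht.1 ht.2

end Orientation

end TwoDim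

section Support

variable {E : Type*} [NormedAddCommGroup E] [InnerProductSpace ℝ E] {K K₁ K₂ : Set E}

theorem isGreatest_image_inner_neg_iff {u : E} {c : ℝ} :
    IsGreatest (inner ℝ (-u) '' K) (-c) ↔ IsLeast (inner ℝ u '' K) c := by
  simp [IsGreatest, IsLeast, upperBounds, lowerBounds, inner_neg_left]

theorem isGreatest_sSup_image_inner (hK : IsCompact K) (hne : K.Nonempty) (u : E) :
    IsGreatest (inner ℝ u '' K) (sSup (inner ℝ u '' K)) :=
  (hK.image (continuous_inner.comp (Continuous.prodMk_right u))).isGreatest_sSup (hne.image _)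

theorem isLeast_sInf_image_inner (hK : IsCompact K) (hne : K.Nonempty) (u : E) :
    IsLeast (inner ℝ u '' K) (sInf (inner ℝ u '' K)) :=
  (hK.image (continuous_inner.comp (Continuous.prodMk_right u))).isLeast_sInf (hne.image _)

theorem sInf_image_inner_le_sSup (hK : IsCompact K) (hne : K.Nonempty) (u : E) :
    sInf (inner ℝ u '' K) ≤ sSup (inner ℝ u '' K) :=
  (isGreatest_sSup_image_inner hK hne u).2 (isLeast_sInf_image_inner hK hne u).1

theorem sSup_image_inner_lt_sInf {w : E} (h₁c : IsCompact K₁) (h₂c : IsCompact K₂)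
    (hne₁ : K₁.Nonempty) (hne₂ : K₂.Nonempty) (hsep : ∀ p ∈ K₁, ∀ q ∈ K₂, ⟪w, p⟫ < ⟪w, q⟫) :
    sSup (inner ℝ w '' K₁) < sInf (inner ℝ w '' K₂) := by
  obtain ⟨p, hp, hpw⟩ := (isGreatest_sSup_image_inner h₁c hne₁ w).1
  obtain ⟨q, hq, hqw⟩ := (isLeast_sInf_image_inner h₂c hne₂ w).1
  exact hpw ▸ hqw ▸ hsep p hp q hq

theorem lt_of_isLeast_of_isGreatest_image_inner (hK : (interior K).Nonempty) {u : E} (hu : u ≠ 0)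
    {a b : ℝ} (ha : IsGreatest (inner ℝ u '' K) a) (hb : IsLeast (inner ℝ u '' K) b) : b < a := by
  obtain ⟨x, hx⟩ := hK
  have hnear : ∀ᶠ t in 𝓝 (0 : ℝ), x + t • u ∈ K := by
    have hx' : Filter.Tendsto (fun t : ℝ => x + t • u) (𝓝 0) (𝓝 x) :=
      Continuous.tendsto' (by fun_prop) 0 x (by simp)
    exact hx'.eventually (mem_interior_iff_mem_nhds.1 hx)
  obtain ⟨t, htK, ht⟩ := ((hnear.filter_mono nhdsWithin_le_nhds).and
    (self_mem_nhdsWithin : Ioi (0 : ℝ) ∈ 𝓝[>] 0)).exists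
  calc b ≤ ⟪u, x⟫ := hb.2 (mem_image_of_mem _ (interior_subset hx))
    _ < ⟪u, x⟫ + t * ‖u‖ ^ 2 := lt_add_of_pos_right _ (by positivity)
    _ = ⟪u, x + t • u⟫ := by rw [inner_add_right, real_inner_smul_right, real_inner_self_eq_norm_sq]
    _ ≤ a := ha.2 (mem_image_of_mem _ htK)

variable [CompleteSpace E]

theorem exists_norm_eq_one_inner_lt_inner (h₁c : IsCompact K₁) (h₁conv : Convex ℝ K₁)
    (h₂c : IsClosed K₂) (h₂conv : Convex ℝ K₂) (hne₁ : K₁.Nonempty) (hne₂ : K₂.Nonempty)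
    (hdisj : Disjoint K₁ K₂) : ∃ w : E, ‖w‖ = 1 ∧ ∀ p ∈ K₁, ∀ q ∈ K₂, ⟪w, p⟫ < ⟪w, q⟫ := by
  obtain ⟨f, a, b, hfa, hab, hfb⟩ :=
    geometric_hahn_banach_compact_closed h₁conv h₁c h₂conv h₂c hdisj
  set z := (toDual ℝ E).symm f
  have hz : ∀ x, ⟪z, x⟫ = f x := fun x => toDual_symm_apply
  have hlt : ∀ p ∈ K₁, ∀ q ∈ K₂, ⟪z, p⟫ < ⟪z, q⟫ := fun p hp q hq => by
    rw [hz, hz]; linarith [hfa p hp, hfb q hq]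
  obtain ⟨p, hp⟩ := hne₁
  obtain ⟨q, hq⟩ := hne₂
  have hz0 : z ≠ 0 := by rintro h; simpa [h] using hlt p hp q hq
  refine ⟨‖z‖⁻¹ • z, by simp [norm_smul, hz0], fun p hp q hq => ?_⟩
  simp only [real_inner_smul_left]
  exact mul_lt_mul_of_pos_left (hlt p hp q hq) (by positivity)

end Support

section TangentNormals

variable {E : Type*} [NormedAddCommGroup E] [InnerProductSpace ℝ E] [Fact (finrank ℝ E = 2)]
  {K K₁ K₂ : Set E}

/-- `(u, c)` stands for the line `⟪u, x⟫ = c`, with `K₁` on the side `⟪u, x⟫ ≤ c`; outer tangents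
have `K₂` on the same side, inner ones on the other. -/
def IsCommonTangentNormal (K₁ K₂ : Set E) (u : E) (c : ℝ) : Prop :=
  ‖u‖ = 1 ∧ IsGreatest (inner ℝ u '' K₁) c ∧
    (IsGreatest (inner ℝ u '' K₂) c ∨ IsLeast (inner ℝ u '' K₂) c)

theorem eq_or_eq_neg_of_setOf_inner_eq_eq {u u' : E} {c c' : ℝ} (hu : ‖u‖ = 1) (hu' : ‖u'‖ = 1)
    (h : {x | ⟪u, x⟫ = c} = {x | ⟪u', x⟫ = c'}) : u' = u ∧ c' = c ∨ u' = -u ∧ c' = -c := by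
  obtain ⟨o⟩ : Nonempty (Orientation ℝ E (Fin 2)) := inferInstance
  have hmem : ∀ x, ⟪u, x⟫ = c → ⟪u', x⟫ = c' := fun x hx => (h.subset hx :)
  have h₀ : ⟪u', c • u⟫ = c' := hmem _ (by simp [real_inner_smul_right, hu])
  have h₁ : ⟪u', c • u + o.rightAngleRotation u⟫ = c' :=
    hmem _ (by simp [inner_add_right, real_inner_smul_right, hu])
  have hω : o.areaForm u u' = 0 := by
    rwa [inner_add_right, h₀, add_eq_left, o.inner_rightAngleRotation_right, o.areaForm_swap,
      neg_neg] at h₁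
  have hu'u : u' = ⟪u, u'⟫ • u := by
    simpa [hω, hu] using (o.inner_smul_add_areaForm_smul u u').symm
  have hsq : ⟪u, u'⟫ ^ 2 = 1 := by simpa [hω, hu, hu'] using o.inner_sq_add_areaForm_sq u u'
  have hc' : c' = ⟪u, u'⟫ * c := by
    rw [← h₀, real_inner_smul_right, real_inner_comm, mul_comm]
  rcases sq_eq_one_iff.1 hsq with hs | hs
  · exact .inl ⟨hu'u.trans (by rw [hs, one_smul]), hc'.trans (by rw [hs, one_mul])⟩
  · exact .inr ⟨hu'u.trans (by rw [hs, neg_one_smul]), hc'.trans (by rw [hs, neg_one_mul])⟩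

theorem eq_of_setOf_inner_eq_eq (hK : (interior K).Nonempty) {u u' : E} {c c' : ℝ}
    (hu : ‖u‖ = 1) (hu' : ‖u'‖ = 1) (h : IsGreatest (inner ℝ u '' K) c)
    (h' : IsGreatest (inner ℝ u' '' K) c') (heq : {x | ⟪u, x⟫ = c} = {x | ⟪u', x⟫ = c'}) :
    u = u' := by
  rcases eq_or_eq_neg_of_setOf_inner_eq_eq hu hu' heq with ⟨rfl, -⟩ | ⟨rfl, rfl⟩
  · rfl
  · exact (lt_of_isLeast_of_isGreatest_image_inner hK (ne_zero_of_norm_ne_zero (by simp [hu])) h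
      (isGreatest_image_inner_neg_iff.1 h')).false.elim

namespace Orientation

variable (o : Orientation ℝ E (Fin 2)) {w : E}

local notation "ω" => o.areaForm

theorem areaForm_ne_zero_of_isCommonTangentNormal
    (hsep : ∀ p ∈ K₁, ∀ q ∈ K₂, ⟪w, p⟫ < ⟪w, q⟫) {u : E} {c : ℝ}
    (h : IsCommonTangentNormal K₁ K₂ u c) : ω w u ≠ 0 := by
  obtain ⟨p, hp, hpu⟩ := h.2.1.1
  obtain ⟨q, hq, hqu⟩ : c ∈ inner ℝ u '' K₂ := h.2.2.elim (·.1) (·.1)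
  intro h0
  have hp' := o.inner_mul_inner_add_areaForm_mul_areaForm u w p
  have hq' := o.inner_mul_inner_add_areaForm_mul_areaForm u w q
  rw [o.areaForm_swap, h0, h.1, hpu] at hp'
  rw [o.areaForm_swap, h0, h.1, hqu] at hq'
  linarith [hsep p hp q hq]

theorem outer_tangentNormal_unique (hsep : ∀ p ∈ K₁, ∀ q ∈ K₂, ⟪w, p⟫ < ⟪w, q⟫)
    {u₁ u₂ : E} {c₁ c₂ : ℝ} (hu₁ : ‖u₁‖ = 1) (hu₂ : ‖u₂‖ = 1) (h₁ : 0 < ω w u₁)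
    (h₂ : 0 < ω w u₂) (hK₁u₁ : IsGreatest (inner ℝ u₁ '' K₁) c₁)
    (hK₂u₁ : IsGreatest (inner ℝ u₁ '' K₂) c₁) (hK₁u₂ : IsGreatest (inner ℝ u₂ '' K₁) c₂)
    (hK₂u₂ : IsGreatest (inner ℝ u₂ '' K₂) c₂) : u₁ = u₂ ∧ c₁ = c₂ := by
  obtain ⟨p₁, hp₁, hp₁u⟩ := hK₁u₁.1
  obtain ⟨q₁, hq₁, hq₁u⟩ := hK₂u₁.1
  obtain ⟨p₂, hp₂, hp₂u⟩ := hK₁u₂.1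
  obtain ⟨q₂, hq₂, hq₂u⟩ := hK₂u₂.1
  obtain rfl : u₁ = u₂ := by
    refine o.eq_of_inner_nonpos_of_inner_nonneg (d₁ := q₂ - p₁) (d₂ := q₁ - p₂) hu₁ hu₂ h₁ h₂
      ?_ ?_ ?_ ?_ ?_ ?_ <;> simp only [inner_sub_right]
    · linarith [hsep p₁ hp₁ q₂ hq₂]
    · linarith [hsep p₂ hp₂ q₁ hq₁]
    · linarith [hK₂u₁.2 (mem_image_of_mem _ hq₂)]
    · linarith [hK₁u₂.2 (mem_image_of_mem _ hp₁)]
    · linarith [hK₂u₂.2 (mem_image_of_mem _ hq₁)]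
    · linarith [hK₁u₁.2 (mem_image_of_mem _ hp₂)]
  exact ⟨rfl, hK₁u₁.unique hK₁u₂⟩

theorem inner_tangentNormal_unique (hsep : ∀ p ∈ K₁, ∀ q ∈ K₂, ⟪w, p⟫ < ⟪w, q⟫)
    {u₁ u₂ : E} {c₁ c₂ : ℝ} (hu₁ : ‖u₁‖ = 1) (hu₂ : ‖u₂‖ = 1) (h₁ : 0 < ω w u₁)
    (h₂ : 0 < ω w u₂) (hK₁u₁ : IsGreatest (inner ℝ u₁ '' K₁) c₁)
    (hK₂u₁ : IsLeast (inner ℝ u₁ '' K₂) c₁) (hK₁u₂ : IsGreatest (inner ℝ u₂ '' K₁) c₂)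
    (hK₂u₂ : IsLeast (inner ℝ u₂ '' K₂) c₂) : u₁ = u₂ ∧ c₁ = c₂ := by
  obtain ⟨p₁, hp₁, hp₁u⟩ := hK₁u₁.1
  obtain ⟨q₁, hq₁, hq₁u⟩ := hK₂u₁.1
  obtain ⟨p₂, hp₂, hp₂u⟩ := hK₁u₂.1
  obtain ⟨q₂, hq₂, hq₂u⟩ := hK₂u₂.1
  obtain rfl : u₁ = u₂ := by
    refine o.eq_of_inner_nonpos_of_inner_nonneg (d₁ := q₁ - p₁) (d₂ := q₂ - p₂) hu₁ hu₂ h₁ h₂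
      ?_ ?_ ?_ ?_ ?_ ?_ <;> simp only [inner_sub_right]
    · linarith [hsep p₁ hp₁ q₁ hq₁]
    · linarith [hsep p₂ hp₂ q₂ hq₂]
    · linarith
    · linarith [hK₂u₂.2 (mem_image_of_mem _ hq₁), hK₁u₂.2 (mem_image_of_mem _ hp₁)]
    · linarith
    · linarith [hK₂u₁.2 (mem_image_of_mem _ hq₂), hK₁u₁.2 (mem_image_of_mem _ hp₂)]
  exact ⟨rfl, hK₁u₁.unique hK₁u₂⟩

theorem exists_outer_and_inner_tangentNormal (hw : ‖w‖ = 1)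
    (hsep : ∀ p ∈ K₁, ∀ q ∈ K₂, ⟪w, p⟫ < ⟪w, q⟫) (h₁c : IsCompact K₁) (h₂c : IsCompact K₂)
    (hne₁ : K₁.Nonempty) (hne₂ : K₂.Nonempty) :
    (∃ u c, 0 < ω w u ∧ ‖u‖ = 1 ∧ IsGreatest (inner ℝ u '' K₁) c ∧
      IsGreatest (inner ℝ u '' K₂) c) ∧
    (∃ u c, 0 < ω w u ∧ ‖u‖ = 1 ∧ IsGreatest (inner ℝ u '' K₁) c ∧
      IsLeast (inner ℝ u '' K₂) c) := by
  have h₀ := sSup_image_inner_lt_sInf h₁c h₂c hne₁ hne₂ hsep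
  have hπ := sSup_image_inner_lt_sInf (w := -w) h₂c h₁c hne₂ hne₁ fun q hq p hp => by
    simpa only [inner_neg_left, neg_lt_neg_iff] using hsep p hp q hq
  have := sInf_image_inner_le_sSup h₂c hne₂ w
  have := sInf_image_inner_le_sSup h₁c hne₁ (-w)
  have := sInf_image_inner_le_sSup h₂c hne₂ (-w)
  have hsup₁ := h₁c.continuous_sSup (f := inner ℝ) continuous_inner
  constructor
  · obtain ⟨u, hu, hwu, hφ⟩ := o.exists_areaForm_pos_and_eq_zero hw
      (φ := fun u => sSup (inner ℝ u '' K₁) - sSup (inner ℝ u '' K₂))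
      (hsup₁.sub (h₂c.continuous_sSup (f := inner ℝ) continuous_inner))
      (by linarith) (by linarith)
    have hc : sSup (inner ℝ u '' K₁) = sSup (inner ℝ u '' K₂) := sub_eq_zero.1 hφ
    refine ⟨u, _, hwu, hu, isGreatest_sSup_image_inner h₁c hne₁ u, ?_⟩
    exact hc ▸ isGreatest_sSup_image_inner h₂c hne₂ u
  · obtain ⟨u, hu, hwu, hφ⟩ := o.exists_areaForm_pos_and_eq_zero hw
      (φ := fun u => sSup (inner ℝ u '' K₁) - sInf (inner ℝ u '' K₂))
      (hsup₁.sub (h₂c.continuous_sInf (f := inner ℝ) continuous_inner))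
      (by linarith) (by linarith)
    have hc : sSup (inner ℝ u '' K₁) = sInf (inner ℝ u '' K₂) := sub_eq_zero.1 hφ
    refine ⟨u, _, hwu, hu, isGreatest_sSup_image_inner h₁c hne₁ u, ?_⟩
    exact hc ▸ isLeast_sInf_image_inner h₂c hne₂ u

theorem exists_two_commonTangentNormals_of_areaForm_pos (hw : ‖w‖ = 1)
    (hsep : ∀ p ∈ K₁, ∀ q ∈ K₂, ⟪w, p⟫ < ⟪w, q⟫) (h₁c : IsCompact K₁) (h₂c : IsCompact K₂)
    (hne₁ : K₁.Nonempty) (h₂int : (interior K₂).Nonempty) :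
    ∃ u₁ c₁ u₂ c₂, u₁ ≠ u₂ ∧ 0 < ω w u₁ ∧ 0 < ω w u₂ ∧ IsCommonTangentNormal K₁ K₂ u₁ c₁ ∧
      IsCommonTangentNormal K₁ K₂ u₂ c₂ ∧ ∀ v d, IsCommonTangentNormal K₁ K₂ v d → 0 < ω w v →
        v = u₁ ∧ d = c₁ ∨ v = u₂ ∧ d = c₂ := by
  obtain ⟨⟨u₁, c₁, hw₁, hu₁, hK₁u₁, hK₂u₁⟩, ⟨u₂, c₂, hw₂, hu₂, hK₁u₂, hK₂u₂⟩⟩ :=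
    o.exists_outer_and_inner_tangentNormal hw hsep h₁c h₂c hne₁ (h₂int.mono interior_subset)
  refine ⟨u₁, c₁, u₂, c₂, ?_, hw₁, hw₂, ⟨hu₁, hK₁u₁, .inl hK₂u₁⟩, ⟨hu₂, hK₁u₂, .inr hK₂u₂⟩, ?_⟩
  · rintro rfl
    obtain rfl := hK₁u₁.unique hK₁u₂
    exact (lt_of_isLeast_of_isGreatest_image_inner h₂int (ne_zero_of_norm_ne_zero (by simp [hu₁]))
      hK₂u₁ hK₂u₂).false
  · rintro v d ⟨hv, hK₁v, hK₂v | hK₂v⟩ hwv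
    · exact .inl (o.outer_tangentNormal_unique hsep hv hu₁ hwv hw₁ hK₁v hK₂v hK₁u₁ hK₂u₁)
    · exact .inr (o.inner_tangentNormal_unique hsep hv hu₂ hwv hw₂ hK₁v hK₂v hK₁u₂ hK₂u₂)

end Orientation

theorem exists_four_commonTangentNormals (h₁c : IsCompact K₁) (h₂c : IsCompact K₂)
    (h₁conv : Convex ℝ K₁) (h₂conv : Convex ℝ K₂) (h₂int : (interior K₂).Nonempty)
    (hne₁ : K₁.Nonempty) (hdisj : Disjoint K₁ K₂) :
    ∃ u : Fin 4 → E, ∃ c : Fin 4 → ℝ, Function.Injective u ∧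
      (∀ i, IsCommonTangentNormal K₁ K₂ (u i) (c i)) ∧
      ∀ v d, IsCommonTangentNormal K₁ K₂ v d → ∃ i, v = u i ∧ d = c i := by
  obtain ⟨w, hw, hsep⟩ := exists_norm_eq_one_inner_lt_inner h₁c h₁conv h₂c.isClosed h₂conv hne₁
    (h₂int.mono interior_subset) hdisj
  obtain ⟨o⟩ : Nonempty (Orientation ℝ E (Fin 2)) := inferInstance
  have hω : ∀ u, (-o).areaForm w u = -o.areaForm w u := by simp [o.areaForm_neg_orientation]
  obtain ⟨u₁, c₁, u₃, c₃, h₁₃, hw₁, hw₃, hn₁, hn₃, hpos⟩ :=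
    o.exists_two_commonTangentNormals_of_areaForm_pos hw hsep h₁c h₂c hne₁ h₂int
  obtain ⟨u₂, c₂, u₄, c₄, h₂₄, hw₂, hw₄, hn₂, hn₄, hneg⟩ :=
    (-o).exists_two_commonTangentNormals_of_areaForm_pos hw hsep h₁c h₂c hne₁ h₂int
  refine ⟨![u₁, u₂, u₃, u₄], ![c₁, c₂, c₃, c₄], ?_, ?_, ?_⟩
  · have : u₁ ≠ u₂ ∧ u₁ ≠ u₄ ∧ u₃ ≠ u₂ ∧ u₃ ≠ u₄ := by
      refine ⟨?_, ?_, ?_, ?_⟩ <;> rintro rfl <;> linarith [hω u₁, hω u₃]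
    intro i j h
    fin_cases i <;> fin_cases j <;> simp at h ⊢ <;> grind
  · intro i
    fin_cases i
    exacts [hn₁, hn₂, hn₃, hn₄]
  · intro v d hv
    rcases (o.areaForm_ne_zero_of_isCommonTangentNormal hsep hv).lt_or_gt with hw | hw
    · rcases hneg v d hv (by linarith [hω v]) with ⟨rfl, rfl⟩ | ⟨rfl, rfl⟩
      exacts [⟨1, rfl, rfl⟩, ⟨3, rfl, rfl⟩]
    · rcases hpos v d hv hw with ⟨rfl, rfl⟩ | ⟨rfl, rfl⟩
      exacts [⟨0, rfl, rfl⟩, ⟨2, rfl, rfl⟩]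

end TangentNormals

section Lines

theorem lineThrough_smul {p v : Pt} {a : ℝ} (ha : a ≠ 0) :
    lineThrough p (a • v) = lineThrough p v := by
  ext x
  constructor
  · rintro ⟨t, rfl⟩
    exact ⟨t * a, by rw [mul_smul]⟩
  · rintro ⟨t, rfl⟩
    exact ⟨t / a, by rw [smul_smul, div_mul_cancel₀ _ ha]⟩

theorem setOf_inner_eq_eq_lineThrough (o : Orientation ℝ Pt (Fin 2)) {u : Pt} (hu : ‖u‖ = 1)
    (p : Pt) : {x | ⟪u, x⟫ = ⟪u, p⟫} = lineThrough p (o.rightAngleRotation u) := by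
  ext x
  constructor
  · intro hx
    have hxp : ⟪u, x - p⟫ = 0 := by rw [inner_sub_right, hx, sub_self]
    exact ⟨o.areaForm u (x - p), by rw [← o.eq_areaForm_smul_of_inner_eq_zero hu hxp]; abel⟩
  · rintro ⟨t, rfl⟩
    simp [inner_add_right, real_inner_smul_right, o.inner_rightAngleRotation_right]

theorem isLine_setOf_inner_eq {u : Pt} (hu : ‖u‖ = 1) (c : ℝ) : IsLine {x | ⟪u, x⟫ = c} := by
  obtain ⟨o⟩ : Nonempty (Orientation ℝ Pt (Fin 2)) := inferInstance
  have hc : ⟪u, c • u⟫ = c := by simp [real_inner_smul_right, hu]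
  exact ⟨c • u, o.rightAngleRotation u, ne_zero_of_norm_ne_zero (by simp [hu]),
    by rw [← setOf_inner_eq_eq_lineThrough o hu, hc]⟩

theorem lineThrough_eq_setOf_inner_eq {u p v : Pt} {c : ℝ} (hu : ‖u‖ = 1) (hv : v ≠ 0)
    (h : lineThrough p v ⊆ {x | ⟪u, x⟫ = c}) : lineThrough p v = {x | ⟪u, x⟫ = c} := by
  obtain ⟨o⟩ : Nonempty (Orientation ℝ Pt (Fin 2)) := inferInstance
  have hp : ⟪u, p⟫ = c := h ⟨0, by simp⟩
  have huv : ⟪u, v⟫ = 0 := by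
    simpa [inner_add_right, hp] using (h ⟨1, by simp⟩ : ⟪u, p + 1 • v⟫ = c)
  have hv' := o.eq_areaForm_smul_of_inner_eq_zero hu huv
  have hω : o.areaForm u v ≠ 0 := fun h0 => hv (by rw [hv', h0, zero_smul])
  rw [← hp, setOf_inner_eq_eq_lineThrough o hu, ← lineThrough_smul (v := o.rightAngleRotation u) hω,
    ← hv']

theorem isTangentTo_of_isGreatest {K : Set Pt} {u : Pt} {c : ℝ} (hu : ‖u‖ = 1)
    (h : IsGreatest (inner ℝ u '' K) c) : IsTangentTo {x | ⟪u, x⟫ = c} K := by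
  obtain ⟨x, hx, rfl⟩ := h.1
  refine ⟨⟨x, rfl, hx⟩, innerSL ℝ u, ?_, _, fun y hy => hy, fun y hy => h.2 (mem_image_of_mem _ hy)⟩
  exact ne_of_apply_ne norm (by simp [hu])

theorem isTangentTo_of_isLeast {K : Set Pt} {u : Pt} {c : ℝ} (hu : ‖u‖ = 1)
    (h : IsLeast (inner ℝ u '' K) c) : IsTangentTo {x | ⟪u, x⟫ = c} K := by
  have hneg : {x | ⟪u, x⟫ = c} = {x | ⟪-u, x⟫ = -c} := by ext; simp [inner_neg_left]
  rw [hneg]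
  exact isTangentTo_of_isGreatest (by simpa using hu) (isGreatest_image_inner_neg_iff.2 h)

theorem IsCommonTangentNormal.isLine_isTangentTo {K₁ K₂ : Set Pt} {u : Pt} {c : ℝ}
    (h : IsCommonTangentNormal K₁ K₂ u c) :
    IsLine {x | ⟪u, x⟫ = c} ∧ IsTangentTo {x | ⟪u, x⟫ = c} K₁ ∧
      IsTangentTo {x | ⟪u, x⟫ = c} K₂ :=
  ⟨isLine_setOf_inner_eq h.1 c, isTangentTo_of_isGreatest h.1 h.2.1,
    h.2.2.elim (isTangentTo_of_isGreatest h.1) (isTangentTo_of_isLeast h.1)⟩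

theorem exists_isGreatest_of_isTangentTo {M K : Set Pt} (hM : IsLine M) (hMK : IsTangentTo M K) :
    ∃ u c, ‖u‖ = 1 ∧ M = {x | ⟪u, x⟫ = c} ∧ IsGreatest (inner ℝ u '' K) c := by
  obtain ⟨p, v, hv, rfl⟩ := hM
  obtain ⟨⟨x, hxM, hxK⟩, f, hf, c, hMf, hKf⟩ := hMK
  set z := (toDual ℝ Pt).symm f
  have hz : z ≠ 0 := by simpa [z] using hf
  have hu : ∀ y, ⟪‖z‖⁻¹ • z, y⟫ = ‖z‖⁻¹ * f y := fun y => by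
    rw [real_inner_smul_left, toDual_symm_apply]
  refine ⟨‖z‖⁻¹ • z, ‖z‖⁻¹ * c, by simp [norm_smul, hz],
    lineThrough_eq_setOf_inner_eq (by simp [norm_smul, hz]) hv fun y hy => ?_, ⟨x, hxK, ?_⟩, ?_⟩
  · exact (hu y).trans (congrArg _ (hMf hy))
  · exact (hu x).trans (congrArg _ (hMf hxM))
  · rintro _ ⟨y, hy, rfl⟩
    rw [hu]
    exact mul_le_mul_of_nonneg_left (hKf hy) (by positivity)

theorem exists_commonTangentNormal_of_isTangentTo {K₁ K₂ M : Set Pt} (hM : IsLine M)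
    (h₁ : IsTangentTo M K₁) (h₂ : IsTangentTo M K₂) :
    ∃ u c, IsCommonTangentNormal K₁ K₂ u c ∧ M = {x | ⟪u, x⟫ = c} := by
  obtain ⟨u, c, hu, rfl, hK₁⟩ := exists_isGreatest_of_isTangentTo hM h₁
  obtain ⟨u', c', hu', hM', hK₂⟩ := exists_isGreatest_of_isTangentTo hM h₂
  refine ⟨u, c, ⟨hu, hK₁, ?_⟩, rfl⟩
  rcases eq_or_eq_neg_of_setOf_inner_eq_eq hu hu' hM' with ⟨rfl, rfl⟩ | ⟨rfl, rfl⟩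
  · exact .inl hK₂
  · exact .inr (isGreatest_image_inner_neg_iff.1 hK₂)

end Lines

/-- Two disjoint compact convex sets with nonempty interiors have exactly four common
tangent lines. -/
theorem four_common_tangents (K₁ K₂ : Set Pt) (h₁c : IsCompact K₁) (h₂c : IsCompact K₂)
    (h₁conv : Convex ℝ K₁) (h₂conv : Convex ℝ K₂)
    (h₁int : (interior K₁).Nonempty) (h₂int : (interior K₂).Nonempty)
    (hdisj : K₁ ∩ K₂ = ∅) :
    ∃ L : Fin 4 → Set Pt, Function.Injective L ∧
      (∀ i, IsLine (L i) ∧ IsTangentTo (L i) K₁ ∧ IsTangentTo (L i) K₂) ∧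
      ∀ M : Set Pt, IsLine M → IsTangentTo M K₁ → IsTangentTo M K₂ → ∃ i, M = L i := by
  obtain ⟨u, c, hu, hnormal, hall⟩ := exists_four_commonTangentNormals h₁c h₂c h₁conv h₂conv
    h₂int (h₁int.mono interior_subset) (disjoint_iff_inter_eq_empty.2 hdisj)
  refine ⟨fun i => {x | ⟪u i, x⟫ = c i}, fun i j hij => hu ?_,
    fun i => (hnormal i).isLine_isTangentTo, fun M hM hM₁ hM₂ => ?_⟩
  · exact eq_of_setOf_inner_eq_eq h₁int (hnormal i).1 (hnormal j).1 (hnormal i).2.1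
      (hnormal j).2.1 hij
  · obtain ⟨v, d, hvd, rfl⟩ := exists_commonTangentNormal_of_isTangentTo hM hM₁ hM₂
    obtain ⟨i, rfl, rfl⟩ := hall v d hvd
    exact ⟨i, rfl⟩
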